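/- arXiv:2108.06100 — 3 statements merged into one kernel-verified Lean document; each statement's English description precedes it below -/
import Mathlib

section
/- If G is an amenable group and A ⊆ B is a G-tight inclusion of G-C*-algebras, then A = ℂ. Consequently, if a group admits a G-tight inclusion A ⊆ B with A nontrivial, then G is non-amenable. -/
/-! An invariant state `τ` on `A`, followed by the unit map `ℂ → B`, is a `G`-equivariant ucp map
`A → B`. Tightness forces it to be the inclusion, so `ι a = τ a • 1 = ι (τ a • 1)` for every `a`,
and injectivity of `ι` gives `a = τ a • 1`. -/

open scoped BoundedContinuousFunction ENNReal

/-- An element of a star ring is (formally) positive if it is of the form `b* * b`. -/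
def StarPos {R : Type*} [NonUnitalSemiring R] [StarRing R] (a : R) : Prop :=
  ∃ b, a = star b * b

section UCP

variable {A B : Type*} [Ring A] [StarRing A] [Algebra ℂ A]
  [Ring B] [StarRing B] [Algebra ℂ B]

/-- A ℂ-linear map between unital star algebras is unital completely positive if it is
unital and all its matrix amplifications preserve positivity. -/
def IsUCP (φ : A →ₗ[ℂ] B) : Prop :=
  φ 1 = 1 ∧ ∀ (n : ℕ) (M : Matrix (Fin n) (Fin n) A), StarPos M → StarPos (M.map φ)

/-- A unital positive ℂ-linear map between unital star algebras. -/
def IsUP (φ : A →ₗ[ℂ] B) : Prop :=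
  φ 1 = 1 ∧ ∀ a : A, StarPos a → StarPos (φ a)

/-- Equivariance of a linear map with respect to actions of `G`. -/
def IsEquivariant (G : Type*) [SMul G A] [SMul G B] (φ : A →ₗ[ℂ] B) : Prop :=
  ∀ (g : G) (a : A), φ (g • a) = g • φ a

/-- An inclusion (embedding) `ι : A → B` of `G`-operator algebras is `G`-tight if the only
`G`-equivariant ucp map `A → B` is the inclusion itself. -/
def IsTight (G : Type*) [SMul G A] [SMul G B] (ι : A →⋆ₐ[ℂ] B) : Prop :=
  ∀ φ : A →ₗ[ℂ] B, IsUCP φ → IsEquivariant G φ → φ = ι.toAlgHom.toLinearMap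

end UCP

theorem StarPos.matrix_map {R S F n : Type*} [Fintype n]
    [NonUnitalSemiring R] [StarRing R] [NonUnitalSemiring S] [StarRing S]
    [FunLike F R S] [NonUnitalRingHomClass F R S] [StarHomClass F R S] (f : F)
    {M : Matrix n n R} (hM : StarPos M) : StarPos (M.map f) := by
  obtain ⟨C, rfl⟩ := hM
  refine ⟨C.map f, ?_⟩
  rw [Matrix.map_mul, Matrix.star_eq_conjTranspose, Matrix.star_eq_conjTranspose,
    Matrix.conjTranspose_map f (map_star f)]

theorem IsUCP.starAlgHom_comp {A C B : Type*} [Ring A] [StarRing A] [Algebra ℂ A]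
    [Ring C] [StarRing C] [Algebra ℂ C] [Ring B] [StarRing B] [Algebra ℂ B]
    {τ : A →ₗ[ℂ] C} (hτ : IsUCP τ) (f : C →⋆ₐ[ℂ] B) :
    IsUCP (f.toAlgHom.toLinearMap.comp τ) := by
  refine ⟨by simp [hτ.1], fun n M hM => ?_⟩
  have hmap : M.map (f.toAlgHom.toLinearMap.comp τ) = (M.map τ).map f := by
    rw [Matrix.map_map]; rfl
  rw [hmap]
  exact (hτ.2 n M hM).matrix_map f

theorem isEquivariant_ofId_comp {G A B : Type*} [Monoid G] [Ring A] [Algebra ℂ A] [SMul G A]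
    [Ring B] [StarRing B] [Algebra ℂ B] [StarModule ℂ B] [MulDistribMulAction G B]
    [SMulCommClass G ℂ B] {τ : A →ₗ[ℂ] ℂ} (hτ : ∀ (g : G) (a : A), τ (g • a) = τ a) :
    IsEquivariant G ((StarAlgHom.ofId ℂ B).toAlgHom.toLinearMap.comp τ) := by
  intro g a
  change algebraMap ℂ B (τ (g • a)) = g • algebraMap ℂ B (τ a)
  rw [hτ g a, Algebra.algebraMap_eq_smul_one, smul_comm, smul_one]

theorem stmt_2_general {G : Type v} {A B : Type u} [Group G]
    [NormedRing A] [StarRing A] [CStarRing A] [NormedAlgebra ℂ A] [StarModule ℂ A]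
    [NormedRing B] [StarRing B] [NormedAlgebra ℂ B] [StarModule ℂ B]
    [MulSemiringAction G A] [MulSemiringAction G B] [SMulCommClass G ℂ B]
    (hamen : ∀ (A' : Type u) [NormedRing A'] [StarRing A'] [CStarRing A']
      [NormedAlgebra ℂ A'] [StarModule ℂ A'] [MulSemiringAction G A'],
      ∃ τ : A' →ₗ[ℂ] ℂ, IsUCP τ ∧ ∀ (g : G) (a : A'), τ (g • a) = τ a)
    (ι : A →⋆ₐ[ℂ] B) (hinj : Function.Injective ι)
    (htight : IsTight G ι) :
    ∀ a : A, ∃ c : ℂ, a = algebraMap ℂ A c := by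
  obtain ⟨τ, hτ, hτ_inv⟩ := hamen A
  have hι := htight _ (hτ.starAlgHom_comp (StarAlgHom.ofId ℂ B)) (isEquivariant_ofId_comp hτ_inv)
  intro a
  refine ⟨τ a, hinj ?_⟩
  have hιa := LinearMap.congr_fun hι a
  simp only [LinearMap.comp_apply, AlgHom.toLinearMap_apply, StarAlgHom.coe_toAlgHom,
    StarAlgHom.ofId_apply] at hιa
  rw [← hιa, AlgHomClass.commutes]

/-- If `G` is amenable (every unital `G`-C*-algebra admits a `G`-invariant state)
and `A ⊆ B` is a `G`-tight inclusion, then `A = ℂ`; equivalently, a group admitting a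
`G`-tight inclusion with `A` nontrivial is non-amenable. -/
theorem stmt_2 {G : Type v} {A B : Type u} [Group G]
    [NormedRing A] [StarRing A] [CStarRing A] [NormedAlgebra ℂ A] [StarModule ℂ A]
    [NormedRing B] [StarRing B] [CStarRing B] [NormedAlgebra ℂ B] [StarModule ℂ B]
    [MulSemiringAction G A] [MulSemiringAction G B] [SMulCommClass G ℂ B]
    (hamen : ∀ (A' : Type u) [NormedRing A'] [StarRing A'] [CStarRing A']
      [NormedAlgebra ℂ A'] [StarModule ℂ A'] [MulSemiringAction G A'],
      ∃ τ : A' →ₗ[ℂ] ℂ, IsUCP τ ∧ ∀ (g : G) (a : A'), τ (g • a) = τ a)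
    (ι : A →⋆ₐ[ℂ] B) (hinj : Function.Injective ι)
    (htight : IsTight G ι) :
    ∀ a : A, ∃ c : ℂ, a = algebraMap ℂ A c :=
  stmt_2_general hamen ι hinj htight
end

section
/- Let A ⊆ B ⊆ C be G-equivariant inclusions of G-operator algebras. If the inclusion A ⊆ B is G-tight and there exists a faithful G-equivariant conditional expectation E: C → B, then the inclusion A ⊆ C is G-tight. -/
open scoped BoundedContinuousFunction ENNReal

/-!
Let `φ : A → C` be equivariant and ucp. Then so is `E ∘ φ`, which by tightness of `A ⊆ B` is
the inclusion. Put `d = φ a - a`. Since `B` lies in the multiplicative domain of `E`,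
`E (d⋆ d) = E (φ(a)⋆ φ(a)) - a⋆ a`, and by the Schwarz inequality `φ(a)⋆ φ(a) ≤ φ (a⋆ a)`
this is `≤ 0`. Hence `E (d⋆ d) = 0`, and `d = 0` by faithfulness.
-/

open UniformSpace

namespace UniformSpace.Completion

variable {X : Type*} [NormedRing X] [StarRing X]

noncomputable instance : Star (Completion X) := ⟨Completion.map star⟩

lemma continuous_star : Continuous (star : Completion X → Completion X) := continuous_map

variable [CStarRing X]

lemma coe_star (x : X) : ((star x : X) : Completion X) = star (x : Completion X) :=
  (map_coe star_isometry.uniformContinuous x).symm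

noncomputable instance : StarRing (Completion X) where
  star_involutive x := by
    refine induction_on x (isClosed_eq (continuous_star.comp continuous_star) continuous_id)
      fun a => ?_
    rw [← coe_star, ← coe_star, star_star]
  star_mul x y := by
    refine induction_on₂ x y (isClosed_eq (continuous_star.comp continuous_mul)
      ((continuous_star.comp continuous_snd).mul (continuous_star.comp continuous_fst)))
      fun a b => ?_
    rw [← coe_mul, ← coe_star, ← coe_star, ← coe_star, star_mul, coe_mul]
  star_add x y := by
    refine induction_on₂ x y (isClosed_eq (continuous_star.comp continuous_add)
      ((continuous_star.comp continuous_fst).add (continuous_star.comp continuous_snd)))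
      fun a b => ?_
    rw [← coe_add, ← coe_star, ← coe_star, ← coe_star, star_add, coe_add]

noncomputable instance : CStarRing (Completion X) where
  norm_mul_self_le x := by
    refine induction_on x (isClosed_le (continuous_norm.mul continuous_norm)
      (continuous_norm.comp (continuous_star.mul continuous_id))) fun a => ?_
    rw [← coe_star, ← coe_mul, norm_coe, norm_coe, CStarRing.norm_star_mul_self]

variable [NormedAlgebra ℂ X] [StarModule ℂ X]

noncomputable instance : NormedAlgebra ℂ (Completion X) where
  norm_smul_le := norm_smul_le

noncomputable instance : StarModule ℂ (Completion X) where
  star_smul c x := by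
    refine induction_on x (isClosed_eq (continuous_star.comp (continuous_const_smul c))
      (continuous_star.const_smul (star c))) fun a => ?_
    rw [← coe_smul, ← coe_star, ← coe_star, ← coe_smul, star_smul]

noncomputable instance : CStarAlgebra (Completion X) := { }

end UniformSpace.Completion

def starSqCone (R : Type*) [NonUnitalSemiring R] [StarRing R] : AddSubmonoid R :=
  AddSubmonoid.closure (Set.range fun s : R => star s * s)

lemma star_mul_self_mem_starSqCone {R : Type*} [NonUnitalSemiring R] [StarRing R] (s : R) :
    star s * s ∈ starSqCone R :=
  AddSubmonoid.subset_closure ⟨s, rfl⟩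

section CStarRing

variable {X : Type*} [NormedRing X] [StarRing X] [CStarRing X] [NormedAlgebra ℂ X]
  [StarModule ℂ X]

/-- Without completeness there is no continuous functional calculus on `X`, so this is read off
in the completion, where the cone consists of nonnegative elements of the spectral order. -/
lemma eq_zero_of_add_eq_zero_of_mem_starSqCone {x y : X} (hx : x ∈ starSqCone X)
    (hy : y ∈ starSqCone X) (h : x + y = 0) : x = 0 := by
  let _ := CStarAlgebra.spectralOrder (Completion X)
  have := CStarAlgebra.spectralOrderedRing (Completion X)
  have nonneg : ∀ z ∈ starSqCone X, 0 ≤ (z : Completion X) := by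
    intro z hz
    induction hz using AddSubmonoid.closure_induction with
    | mem _ hs =>
      obtain ⟨s, rfl⟩ := hs
      rw [Completion.coe_mul, Completion.coe_star]
      exact star_mul_self_nonneg _
    | zero => rw [Completion.coe_zero]
    | add _ _ _ _ ha hb => rw [Completion.coe_add]; exact add_nonneg ha hb
  have hsum : (x : Completion X) + y = 0 := by rw [← Completion.coe_add, h, Completion.coe_zero]
  exact Completion.coe_eq_zero_iff.mp
    ((add_eq_zero_iff_of_nonneg (nonneg x hx) (nonneg y hy)).mp hsum).1

lemma eq_zero_of_sum_star_mul_self_eq_zero {ι : Type*} [Fintype ι] {w : ι → X}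
    (h : ∑ k, star (w k) * w k = 0) (i : ι) : w i = 0 := by
  classical
  rw [← Finset.add_sum_erase _ _ (Finset.mem_univ i)] at h
  refine (CStarRing.star_mul_self_eq_zero_iff _).mp
    (eq_zero_of_add_eq_zero_of_mem_starSqCone (star_mul_self_mem_starSqCone _) ?_ h)
  exact AddSubmonoid.sum_mem _ fun k _ => star_mul_self_mem_starSqCone (w k)

end CStarRing

lemma sum_star_sub_mul_mul_sub_mul {R ι : Type*} [Ring R] [StarRing R] [Fintype ι]
    (u v : ι → R) (b : R) (hu : ∑ k, star (u k) * u k = 1) (hb : ∑ k, star (u k) * v k = b) :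
    ∑ k, star (v k - u k * b) * (v k - u k * b) = ∑ k, star (v k) * v k - star b * b := by
  have hb' : ∑ k, star (v k) * u k = star b := by
    simp only [← hb, star_sum, star_mul, star_star]
  have expand : ∀ k, star (v k - u k * b) * (v k - u k * b) = star (v k) * v k
      - star (v k) * u k * b - star b * (star (u k) * v k) + star b * (star (u k) * u k) * b := by
    intro k
    simp only [star_sub, star_mul]
    noncomm_ring
  simp only [expand, Finset.sum_add_distrib, Finset.sum_sub_distrib, ← Finset.sum_mul,
    ← Finset.mul_sum, hu, hb, hb']
  noncomm_ring

lemma IsEquivariant.comp {G P Q R : Type*} [Ring P] [Algebra ℂ P] [Ring Q] [Algebra ℂ Q]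
    [Ring R] [Algebra ℂ R] [SMul G P] [SMul G Q] [SMul G R] {ψ : Q →ₗ[ℂ] R}
    {φ : P →ₗ[ℂ] Q} (hψ : IsEquivariant G ψ) (hφ : IsEquivariant G φ) :
    IsEquivariant G (ψ ∘ₗ φ) := fun g a => by
  rw [LinearMap.comp_apply, hφ g a, hψ g (φ a), LinearMap.comp_apply]

section UCP

variable {P Q R : Type*} [Ring P] [StarRing P] [Algebra ℂ P] [Ring Q] [StarRing Q] [Algebra ℂ Q]
  [Ring R] [StarRing R] [Algebra ℂ R]

lemma IsUCP.comp {ψ : Q →ₗ[ℂ] R} {φ : P →ₗ[ℂ] Q} (hψ : IsUCP ψ) (hφ : IsUCP φ) :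
    IsUCP (ψ ∘ₗ φ) :=
  ⟨by rw [LinearMap.comp_apply, hφ.1, hψ.1], fun n M hM => by
    rw [LinearMap.coe_comp, ← Matrix.map_map]
    exact hψ.2 n _ (hφ.2 n M hM)⟩

variable {ψ : P →ₗ[ℂ] Q}

/-- Complete positivity applied to `star M * M`, where `M` has `m` as its only nonzero row. -/
lemma IsUCP.exists_gram (hψ : IsUCP ψ) {n : ℕ} (m : Fin (n + 1) → P) :
    ∃ N : Fin (n + 1) → Fin (n + 1) → Q,
      ∀ i j, ψ (star (m i) * m j) = ∑ k, star (N k i) * N k j := by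
  let M : Matrix (Fin (n + 1)) (Fin (n + 1)) P := Matrix.of fun i j => if i = 0 then m j else 0
  have hM : ∀ i j, (star M * M) i j = star (m i) * m j := by
    intro i j
    rw [Matrix.star_eq_conjTranspose, Matrix.mul_apply,
      Finset.sum_eq_single_of_mem 0 (Finset.mem_univ 0) fun k _ hk => by simp [M, hk]]
    simp [M]
  obtain ⟨N, hN⟩ := hψ.2 (n + 1) (star M * M) ⟨M, rfl⟩
  refine ⟨N, fun i j => ?_⟩
  rw [← hM, ← Matrix.map_apply (f := ψ), hN, Matrix.star_eq_conjTranspose, Matrix.mul_apply]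
  rfl

lemma IsUCP.map_star (hψ : IsUCP ψ) (x : P) : ψ (star x) = star (ψ x) := by
  obtain ⟨N, hN⟩ := hψ.exists_gram ![1, x]
  have h01 := hN 0 1
  have h10 := hN 1 0
  simp only [Matrix.cons_val_zero, Matrix.cons_val_one, star_one, one_mul, mul_one] at h01 h10
  rw [h01, h10, star_sum]
  simp only [star_mul, star_star]

lemma IsUCP.map_star_mul_self_sub_mem_starSqCone (hψ : IsUCP ψ) (x : P) :
    ψ (star x * x) - star (ψ x) * ψ x ∈ starSqCone Q := by
  obtain ⟨N, hN⟩ := hψ.exists_gram ![1, x]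
  have h00 := hN 0 0
  have h01 := hN 0 1
  have h11 := hN 1 1
  simp only [Matrix.cons_val_zero, Matrix.cons_val_one, star_one, one_mul, hψ.1] at h00 h01 h11
  rw [h11, h01, ← sum_star_sub_mul_mul_sub_mul _ _ _ h00.symm rfl]
  exact AddSubmonoid.sum_mem _ fun k _ => star_mul_self_mem_starSqCone _

lemma IsUCP.map_mem_starSqCone (hψ : IsUCP ψ) {x : P} (hx : x ∈ starSqCone P) :
    ψ x ∈ starSqCone Q := by
  induction hx using AddSubmonoid.closure_induction with
  | mem _ hs =>
    obtain ⟨s, rfl⟩ := hs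
    rw [← sub_add_cancel (ψ (star s * s)) (star (ψ s) * ψ s)]
    exact add_mem (hψ.map_star_mul_self_sub_mem_starSqCone s) (star_mul_self_mem_starSqCone _)
  | zero => rw [map_zero]; exact zero_mem _
  | add _ _ _ _ ha hb => rw [map_add]; exact add_mem ha hb

end UCP

/-- Choi's multiplicative domain theorem: equality in the Schwarz inequality forces the Gram
vectors of `a` to be those of `1` times `ψ a`. -/
lemma IsUCP.map_star_mul_of_map_star_mul_self {P Q : Type*} [Ring P] [StarRing P]
    [Algebra ℂ P] [NormedRing Q] [StarRing Q] [CStarRing Q] [NormedAlgebra ℂ Q]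
    [StarModule ℂ Q] {ψ : P →ₗ[ℂ] Q} (hψ : IsUCP ψ) {a : P}
    (ha : ψ (star a * a) = star (ψ a) * ψ a) (x : P) :
    ψ (star a * x) = star (ψ a) * ψ x := by
  obtain ⟨N, hN⟩ := hψ.exists_gram ![1, a, x]
  have h00 := hN 0 0
  have h01 := hN 0 1
  have h02 := hN 0 2
  have h11 := hN 1 1
  have h12 := hN 1 2
  simp only [Matrix.cons_val_zero, Matrix.cons_val_one, Matrix.cons_val_two, Matrix.tail_cons,
    Matrix.head_cons, star_one, one_mul, hψ.1] at h00 h01 h02 h11 h12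
  have hrow : ∀ k, N k 1 = N k 0 * ψ a := by
    refine fun k => sub_eq_zero.mp (eq_zero_of_sum_star_mul_self_eq_zero
      (w := fun k => N k 1 - N k 0 * ψ a) ?_ k)
    rw [sum_star_sub_mul_mul_sub_mul _ _ _ h00.symm h01.symm, ← h11, ha, sub_self]
  rw [h12, h02, Finset.mul_sum]
  simp only [hrow, star_mul, mul_assoc]

section ConditionalExpectation

variable {B C : Type*} [NormedRing B] [StarRing B] [CStarRing B] [NormedAlgebra ℂ B]
  [StarModule ℂ B] [Ring C] [StarRing C] [Algebra ℂ C]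
  {ι : B →⋆ₐ[ℂ] C} {E : C →ₗ[ℂ] B}

lemma IsUCP.map_star_mul_of_leftInverse (hE : IsUCP E) (hEι : Function.LeftInverse E ι)
    (b : B) (x : C) : E (star (ι b) * x) = star b * E x := by
  have hb := hE.map_star_mul_of_map_star_mul_self (a := ι b)
    (by rw [hEι, ← StarHomClass.map_star ι, ← map_mul ι, hEι]) x
  rwa [hEι] at hb

lemma IsUCP.map_mul_of_leftInverse (hE : IsUCP E) (hEι : Function.LeftInverse E ι)
    (x : C) (b : B) : E (x * ι b) = E x * b := by
  rw [← star_star (x * ι b), star_mul, hE.map_star, hE.map_star_mul_of_leftInverse hEι,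
    hE.map_star, star_mul, star_star, star_star]

lemma IsUCP.map_star_sub_mul_sub_of_leftInverse (hE : IsUCP E)
    (hEι : Function.LeftInverse E ι) (x : C) :
    E (star (x - ι (E x)) * (x - ι (E x))) = E (star x * x) - star (E x) * E x := by
  have hexpand : star (x - ι (E x)) * (x - ι (E x)) = star x * x - star x * ι (E x)
      - star (ι (E x)) * x + star (ι (E x)) * ι (E x) := by
    rw [star_sub]; noncomm_ring
  rw [hexpand, map_add, map_sub, map_sub, hE.map_mul_of_leftInverse hEι,
    hE.map_star_mul_of_leftInverse hEι, hE.map_star_mul_of_leftInverse hEι, hEι, hE.map_star]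
  abel

end ConditionalExpectation

theorem stmt_9_general {G A B C : Type*} [Group G]
    [NormedRing A] [StarRing A] [NormedAlgebra ℂ A]
    [NormedRing B] [StarRing B] [CStarRing B] [NormedAlgebra ℂ B] [StarModule ℂ B]
    [NormedRing C] [StarRing C] [NormedAlgebra ℂ C]
    [MulSemiringAction G A] [MulSemiringAction G B] [MulSemiringAction G C]
    (ιAB : A →⋆ₐ[ℂ] B) (ιBC : B →⋆ₐ[ℂ] C)
    (htight : IsTight G ιAB)
    (E : C →ₗ[ℂ] B) (hEucp : IsUCP E) (hEeq : IsEquivariant G E)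
    (hEproj : ∀ b : B, E (ιBC b) = b)
    (hEfaith : ∀ x : C, E (star x * x) = 0 → x = 0) :
    IsTight G (ιBC.comp ιAB) := by
  intro φ hφ hφG
  have hEφ (a : A) : E (φ a) = ιAB a :=
    LinearMap.congr_fun (htight _ (hEucp.comp hφ) (hEeq.comp hφG)) a
  ext a
  set d := φ a - ιBC (E (φ a))
  have hsum : E (star d * d) + E (φ (star a * a) - star (φ a) * φ a) = 0 := by
    rw [hEucp.map_star_sub_mul_sub_of_leftInverse hEproj, map_sub, hEφ, hEφ (star a * a),
      map_mul ιAB, map_star ιAB]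
    abel
  have hd : E (star d * d) = 0 :=
    eq_zero_of_add_eq_zero_of_mem_starSqCone
      (hEucp.map_mem_starSqCone (star_mul_self_mem_starSqCone d))
      (hEucp.map_mem_starSqCone (hφ.map_star_mul_self_sub_mem_starSqCone a)) hsum
  have hφa := sub_eq_zero.mp (hEfaith d hd)
  rw [hEφ] at hφa
  simpa using hφa

/-- If `A ⊆ B` is `G`-tight and there is a faithful `G`-equivariant conditional
expectation `E : C → B`, then `A ⊆ C` is `G`-tight. -/
theorem stmt_9 {G A B C : Type*} [Group G]
    [NormedRing A] [StarRing A] [CStarRing A] [NormedAlgebra ℂ A] [StarModule ℂ A]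
    [NormedRing B] [StarRing B] [CStarRing B] [NormedAlgebra ℂ B] [StarModule ℂ B]
    [NormedRing C] [StarRing C] [CStarRing C] [NormedAlgebra ℂ C] [StarModule ℂ C]
    [MulSemiringAction G A] [MulSemiringAction G B] [MulSemiringAction G C]
    (ιAB : A →⋆ₐ[ℂ] B) (ιBC : B →⋆ₐ[ℂ] C)
    (hBC_inj : Function.Injective ιBC)
    (hBC_eq : ∀ (g : G) (b : B), ιBC (g • b) = g • ιBC b)
    (htight : IsTight G ιAB)
    (E : C →ₗ[ℂ] B) (hEucp : IsUCP E) (hEeq : IsEquivariant G E)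
    (hEproj : ∀ b : B, E (ιBC b) = b)
    (hEfaith : ∀ x : C, E (star x * x) = 0 → x = 0) :
    IsTight G (ιBC.comp ιAB) :=
  stmt_9_general ιAB ιBC htight E hEucp hEeq hEproj hEfaith
end

section
/- Let Γ be a countable discrete group, Λ ≤ Γ, and X a minimal compact Γ-space containing a Λ-fixed point x₀ such that δ_{x₀} is the unique Λ-invariant probability measure on X. Then the inclusion P_{δ_{x₀}}(C(X)) ⊆ ℓ∞(Γ/Λ) given by the Poisson transform is Γ-tight: the unique Γ-equivariant unital positive map C(X) → ℓ∞(Γ/Λ) is P_{δ_{x₀}}, where P_{δ_{x₀}}(f)(gΛ) = f(g x₀). -/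
open scoped BoundedContinuousFunction ENNReal

open MeasureTheory

/-- Left translation action of `Γ` on `ℓ∞(Γ/Λ)`. -/
noncomputable def lTransQ {Γ : Type*} [Group Γ] [TopologicalSpace Γ] (Λ : Subgroup Γ)
    [DiscreteTopology (Γ ⧸ Λ)] (g : Γ) (f : (Γ ⧸ Λ) →ᵇ ℂ) : (Γ ⧸ Λ) →ᵇ ℂ :=
  f.compContinuous ⟨fun x => g⁻¹ • x, continuous_of_discreteTopology⟩

/-! Evaluating `ψ` at the trivial coset gives a unital positive functional on `C(X)`, which
equivariance makes `Λ`-invariant. By Riesz–Markov–Kakutani it is integration against a regular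
probability measure; this measure is `Λ`-invariant by uniqueness of the Riesz measure, hence equals
`δ_{x₀}`. So `ψ f Λ = f x₀`, and equivariance transports this to every coset:
`ψ f (gΛ) = (f ∘ g) x₀`. -/

open scoped ComplexOrder CompactlySupported

namespace ContinuousMap

variable {X : Type*} [TopologicalSpace X]

noncomputable def ofRealLinearMap : C(X, ℝ) →ₗ[ℝ] C(X, ℂ) :=
  (Complex.ofRealCLM.compLeftContinuous ℝ X).toLinearMap

@[simp]
lemma ofRealLinearMap_apply (f : C(X, ℝ)) (x : X) : ofRealLinearMap f x = f x := rfl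

lemma starPos_ofRealLinearMap {f : C(X, ℝ)} (hf : 0 ≤ f) : StarPos (ofRealLinearMap f) := by
  refine ⟨ofRealLinearMap ⟨fun x => √(f x), by fun_prop⟩, ?_⟩
  ext x
  simp [← Complex.ofReal_mul, Real.mul_self_sqrt (show 0 ≤ f x from hf x)]

@[simp]
lemma ofRealLinearMap_one : ofRealLinearMap (1 : C(X, ℝ)) = 1 := by
  ext; simp

end ContinuousMap

lemma StarPos.complex_nonneg {z : ℂ} (hz : StarPos z) : 0 ≤ z := by
  obtain ⟨c, rfl⟩ := hz
  exact star_mul_self_nonneg c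

open ContinuousMap

section RealState

variable {X : Type*} [TopologicalSpace X] (φ : C(X, ℂ) →ₗ[ℂ] ℂ)

lemma im_map_ofRealLinearMap (hφ : ∀ a, StarPos a → StarPos (φ a)) (f : C(X, ℝ)) :
    (φ (ofRealLinearMap f)).im = 0 := by
  have im_eq_zero {g : C(X, ℝ)} (hg : 0 ≤ g) : (φ (ofRealLinearMap g)).im = 0 :=
    (Complex.nonneg_iff.mp (hφ _ (starPos_ofRealLinearMap hg)).complex_nonneg).2.symm
  rw [← posPart_sub_negPart f, map_sub, map_sub, Complex.sub_im, im_eq_zero (posPart_nonneg f),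
    im_eq_zero (negPart_nonneg f), sub_zero]

noncomputable def realState (hφ : ∀ a, StarPos a → StarPos (φ a)) :
    C_c(X, ℝ) →ₚ[ℝ] ℝ :=
  PositiveLinearMap.mk₀
    { toFun f := (φ (ofRealLinearMap f)).re
      map_add' f g := by
        change (φ (ofRealLinearMap ((f : C(X, ℝ)) + g))).re = _
        rw [map_add, map_add, Complex.add_re]
      map_smul' c f := by
        change (φ (ofRealLinearMap (c • (f : C(X, ℝ))))).re = _
        rw [map_smul, φ.map_smul_of_tower, Complex.smul_re, RingHom.id_apply, smul_eq_mul] }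
    fun f hf => (Complex.nonneg_iff.mp
      (hφ _ (starPos_ofRealLinearMap (f := f.toContinuousMap) hf)).complex_nonneg).1

variable [CompactSpace X] [T2Space X] [MeasurableSpace X] [BorelSpace X]
  (hφ : ∀ a, StarPos a → StarPos (φ a))

open RealRMK

lemma integral_rieszMeasure_realState (f : C(X, ℝ)) :
    ∫ x, f x ∂rieszMeasure (realState φ hφ) = (φ (ofRealLinearMap f)).re :=
  integral_rieszMeasure _ (CompactlySupportedContinuousMap.continuousMapEquiv f)

lemma isProbabilityMeasure_rieszMeasure_realState (hφ1 : φ 1 = 1) :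
    IsProbabilityMeasure (rieszMeasure (realState φ hφ)) := by
  have h := integral_rieszMeasure_realState φ hφ 1
  rw [ofRealLinearMap_one, hφ1, Complex.one_re] at h
  simp only [ContinuousMap.one_apply, integral_const, smul_eq_mul, mul_one] at h
  exact ⟨(ENNReal.toReal_eq_one_iff _).mp h⟩

lemma map_rieszMeasure_realState (e : X ≃ₜ X) (he : ∀ f, φ (f.comp (e : C(X, X))) = φ f) :
    (rieszMeasure (realState φ hφ)).map e = rieszMeasure (realState φ hφ) := by
  have : ((rieszMeasure (realState φ hφ)).map e).Regular := .map e
  refine Measure.ext_of_integral_eq_on_compactlySupported fun f => ?_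
  rw [e.measurableEmbedding.integral_map]
  exact (integral_rieszMeasure_realState φ hφ ((f : C(X, ℝ)).comp e)).trans
    ((congrArg Complex.re (he _)).trans (integral_rieszMeasure_realState φ hφ f).symm)

lemma eq_eval_of_rieszMeasure_realState_eq_dirac {x₀ : X}
    (h : rieszMeasure (realState φ hφ) = Measure.dirac x₀) (f : C(X, ℂ)) : φ f = f x₀ := by
  have real_case (g : C(X, ℝ)) : φ (ofRealLinearMap g) = g x₀ := by
    refine Complex.ext ?_ (im_map_ofRealLinearMap φ hφ g)
    rw [← integral_rieszMeasure_realState φ hφ, h, integral_dirac, Complex.ofReal_re]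
  have decomp : f = ofRealLinearMap ⟨fun x => (f x).re, by fun_prop⟩ +
      Complex.I • ofRealLinearMap ⟨fun x => (f x).im, by fun_prop⟩ := by
    ext x; simp [mul_comm Complex.I]
  rw [decomp, map_add, map_smul, real_case, real_case]
  simp [mul_comm Complex.I]

end RealState

theorem IsUP.eq_eval_of_invariant {X G : Type*} [TopologicalSpace X] [CompactSpace X] [T2Space X]
    [MeasurableSpace X] [BorelSpace X] [Group G] [MulAction G X] [ContinuousConstSMul G X]
    {x₀ : X} (huniq : ∀ η : Measure X, IsProbabilityMeasure η →
      (∀ g : G, η.map (g • ·) = η) → η = Measure.dirac x₀)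
    {φ : C(X, ℂ) →ₗ[ℂ] ℂ} (hφ : IsUP φ)
    (hinv : ∀ (g : G) (f : C(X, ℂ)),
      φ (f.comp ((Homeomorph.smul g : X ≃ₜ X) : C(X, X))) = φ f)
    (f : C(X, ℂ)) : φ f = f x₀ :=
  haveI := isProbabilityMeasure_rieszMeasure_realState φ hφ.2 hφ.1
  eq_eval_of_rieszMeasure_realState_eq_dirac φ hφ.2
    (huniq _ this fun g => map_rieszMeasure_realState φ hφ.2 (.smul g) (hinv g)) f

lemma IsUP.evalCLM_comp {A α : Type*} [Ring A] [StarRing A] [Algebra ℂ A] [TopologicalSpace α]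
    {ψ : A →ₗ[ℂ] (α →ᵇ ℂ)} (hψ : IsUP ψ) (a : α) :
    IsUP ((BoundedContinuousFunction.evalCLM ℂ a).toLinearMap ∘ₗ ψ) := by
  refine ⟨by simp [hψ.1], fun b hb => ?_⟩
  obtain ⟨c, hc⟩ := hψ.2 b hb
  exact ⟨c a, by simp [hc]⟩

lemma apply_mk_one_comp_smul {Γ X : Type*} [Group Γ] [TopologicalSpace Γ] {Λ : Subgroup Γ}
    [DiscreteTopology (Γ ⧸ Λ)] [TopologicalSpace X] [MulAction Γ X] [ContinuousConstSMul Γ X]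
    {ψ : C(X, ℂ) →ₗ[ℂ] ((Γ ⧸ Λ) →ᵇ ℂ)}
    (hψ : ∀ (g : Γ) (f : C(X, ℂ)),
      ψ (f.comp ((Homeomorph.smul g⁻¹ : X ≃ₜ X) : C(X, X))) = lTransQ Λ g (ψ f))
    (g : Γ) (f : C(X, ℂ)) :
    ψ (f.comp ((Homeomorph.smul g : X ≃ₜ X) : C(X, X))) (QuotientGroup.mk 1) =
      ψ f (QuotientGroup.mk g) := by
  have := congrArg (· (QuotientGroup.mk 1 : Γ ⧸ Λ)) (hψ g⁻¹ f)
  simp only [inv_inv] at this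
  rw [this]
  simp [lTransQ]

theorem stmt_17_general {Γ X : Type*} [Group Γ]
    [TopologicalSpace Γ]
    (Λ : Subgroup Γ) [DiscreteTopology (Γ ⧸ Λ)]
    [TopologicalSpace X] [CompactSpace X] [T2Space X] [MeasurableSpace X] [BorelSpace X]
    [MulAction Γ X] (hc : ∀ g : Γ, Continuous fun x : X => g • x)
    (x₀ : X)
    -- `δ_{x₀}` is the unique `Λ`-invariant probability measure on `X`:
    (huniq : ∀ η : Measure X, IsProbabilityMeasure η →
      (∀ l ∈ Λ, Measure.map (fun x : X => l • x) η = η) → η = Measure.dirac x₀)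
    -- `ψ` is any `Γ`-equivariant unital positive map `C(X) → ℓ∞(Γ/Λ)`:
    (ψ : C(X, ℂ) →ₗ[ℂ] ((Γ ⧸ Λ) →ᵇ ℂ)) (hψ : IsUP ψ)
    (hψeq : ∀ (g : Γ) (f : C(X, ℂ)),
      ψ (f.comp ⟨fun x => g⁻¹ • x, hc g⁻¹⟩) = lTransQ Λ g (ψ f)) :
    ∀ (f : C(X, ℂ)) (g : Γ), ψ f (QuotientGroup.mk g) = f (g • x₀) := by
  let : ContinuousConstSMul Γ X := ⟨hc⟩
  let : ContinuousConstSMul Λ X := ⟨fun l => hc l⟩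
  have hmove := apply_mk_one_comp_smul hψeq
  have hinv (l : Λ) (f : C(X, ℂ)) :
      ψ (f.comp ((Homeomorph.smul l : X ≃ₜ X) : C(X, X))) (QuotientGroup.mk 1) =
        ψ f (QuotientGroup.mk 1) := by
    rw [show ((Homeomorph.smul l : X ≃ₜ X) : C(X, X)) = (Homeomorph.smul (l : Γ) : X ≃ₜ X)
      from rfl, hmove]
    exact congrArg (ψ f) (QuotientGroup.eq.mpr (by simp))
  intro f g
  rw [← hmove]
  exact (hψ.evalCLM_comp _).eq_eval_of_invariant (G := Λ)
    (fun η hη h => huniq η hη fun l hl => h ⟨l, hl⟩) hinv _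

/-- Let `Γ` be a countable discrete group, `Λ ≤ Γ`, and `X` a minimal compact
`Γ`-space with a `Λ`-fixed point `x₀` such that `δ_{x₀}` is the unique `Λ`-invariant
probability measure on `X`. Then the unique `Γ`-equivariant unital positive map
`C(X) → ℓ∞(Γ/Λ)` is the Poisson transform `P_{δ_{x₀}} f (gΛ) = f (g • x₀)`; i.e. the
inclusion `P_{δ_{x₀}}(C(X)) ⊆ ℓ∞(Γ/Λ)` is `Γ`-tight. -/
theorem stmt_17 {Γ X : Type*} [Group Γ] [Countable Γ]
    [TopologicalSpace Γ] [DiscreteTopology Γ]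
    (Λ : Subgroup Γ) [DiscreteTopology (Γ ⧸ Λ)]
    [TopologicalSpace X] [CompactSpace X] [T2Space X] [MeasurableSpace X] [BorelSpace X]
    [MulAction Γ X] (hc : ∀ g : Γ, Continuous fun x : X => g • x)
    -- minimality:
    (hmin : ∀ x : X, Dense (MulAction.orbit Γ x))
    -- the `Λ`-fixed point:
    (x₀ : X) (hfix : ∀ l ∈ Λ, l • x₀ = x₀)
    -- `δ_{x₀}` is the unique `Λ`-invariant probability measure on `X`:
    (huniq : ∀ η : Measure X, IsProbabilityMeasure η →
      (∀ l ∈ Λ, Measure.map (fun x : X => l • x) η = η) → η = Measure.dirac x₀)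
    -- `ψ` is any `Γ`-equivariant unital positive map `C(X) → ℓ∞(Γ/Λ)`:
    (ψ : C(X, ℂ) →ₗ[ℂ] ((Γ ⧸ Λ) →ᵇ ℂ)) (hψ : IsUP ψ)
    (hψeq : ∀ (g : Γ) (f : C(X, ℂ)),
      ψ (f.comp ⟨fun x => g⁻¹ • x, hc g⁻¹⟩) = lTransQ Λ g (ψ f)) :
    ∀ (f : C(X, ℂ)) (g : Γ), ψ f (QuotientGroup.mk g) = f (g • x₀) :=
  stmt_17_general Λ hc x₀ huniq ψ hψ hψeq
end
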